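/- arXiv:1401.8184 — 7 statements merged into one kernel-verified Lean document; each statement's English description precedes it below -/
import Mathlib

section
/- Fix 1 ≤ i ≤ n−1 and β ∈ ℤ₊ⁿ. Then for every m ∈ ℤ (such that the shifted tuple has nonnegative entries where needed), Σ_{k=1}^{n} θ(ε_k, β)[β_k] = Σ_{k=1}^{n} θ(ε_k, β + m(ε_i − ε_{i+1})) [(β + m(ε_i − ε_{i+1}))_k], where [m] is the quantum integer and θ(ε_k,β) = q^{Σ_{s>k}β_s − Σ_{s<k}β_s}. -/
open Finset

/-- The quantum integer `[m] := (q^m - q^{-m})/(q - q^{-1})` for `m : ℤ`. -/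
def qint {K : Type*} [Field K] (q : K) (m : ℤ) : K :=
  (q ^ m - q ^ (-m)) / (q - q⁻¹)

/-- `θ(ε_k, β) = q^{Σ_{s>k} β_s - Σ_{s<k} β_s}`. -/
def thq {K : Type*} [Field K] (q : K) (n : ℕ) (β : ℕ → ℤ) (k : ℕ) : K :=
  q ^ ((∑ s ∈ Finset.Icc (k + 1) n, β s) - ∑ s ∈ Finset.Ico 1 k, β s)

/-- The `i`-th standard basis vector `ε_i`. -/
def eps (i : ℕ) : ℕ → ℤ := fun k => if k = i then 1 else 0

/-! `θ(ε_k, β) [β_k] (q - q⁻¹) = q^{A_k} - q^{A_{k+1}}` with `A_k = Σ_{s ≥ k} β_s - Σ_{s < k} β_s`,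
so the sum telescopes to `[β_1 + ⋯ + β_n]`, which the shift by `m (ε_i - ε_{i+1})` does not change. -/

section

variable {K : Type*} [Field K] {q : K} {n : ℕ} (β : ℕ → ℤ)

theorem thq_mul_qint (hq : q ≠ 0) {k : ℕ} (hk1 : 1 ≤ k) (hkn : k ≤ n) :
    thq q n β k * qint q (β k) =
      (q ^ (∑ s ∈ Icc k n, β s - ∑ s ∈ Ico 1 k, β s) -
        q ^ (∑ s ∈ Icc (k + 1) n, β s - ∑ s ∈ Ico 1 (k + 1), β s)) / (q - q⁻¹) := by
  rw [← insert_Icc_add_one_left_eq_Icc hkn, sum_insert (by simp), sum_Ico_succ_top hk1, thq,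
    qint, mul_div_assoc', mul_sub, ← zpow_add₀ hq, ← zpow_add₀ hq]
  ring_nf

theorem sum_thq_mul_qint :
    ∑ k ∈ Icc 1 n, thq q n β k * qint q (β k) = qint q (∑ k ∈ Icc 1 n, β k) := by
  rcases eq_or_ne q 0 with rfl | hq
  · simp [qint] -- `0 - 0⁻¹ = 0`, so every quantum integer is `0`
  set A : ℕ → ℤ := fun k ↦ ∑ s ∈ Icc k n, β s - ∑ s ∈ Ico 1 k, β s
  have telescope : ∑ k ∈ Icc 1 n, (q ^ A k - q ^ A (k + 1)) = q ^ A 1 - q ^ A (n + 1) := by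
    rw [← Ico_add_one_right_eq_Icc, ← neg_sub, ← sum_Ico_sub (fun k ↦ q ^ A k) (by omega),
      ← sum_neg_distrib]
    simp_rw [neg_sub]
  have hA1 : A 1 = ∑ k ∈ Icc 1 n, β k := by simp [A]
  have hA : A (n + 1) = -∑ k ∈ Icc 1 n, β k := by simp [A, Ico_add_one_right_eq_Icc]
  rw [sum_congr rfl fun k hk ↦ thq_mul_qint β hq (mem_Icc.1 hk).1 (mem_Icc.1 hk).2, ← sum_div,
    telescope, hA1, hA, qint]

theorem sum_add_smul_eps_sub_eps {s : Finset ℕ} {i : ℕ} (hi : i ∈ s) (hi' : i + 1 ∈ s) (m : ℤ) :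
    ∑ k ∈ s, (β + m • (eps i - eps (i + 1))) k = ∑ k ∈ s, β k := by
  simp [sum_add_distrib, ← mul_sum, sum_sub_distrib, eps, hi, hi']

end

theorem sum_theta_qint_invariant_general {K : Type*} [Field K] (q : K)
    (n i : ℕ) (hi1 : 1 ≤ i) (hi2 : i + 1 ≤ n)
    (β : ℕ → ℤ) (m : ℤ) :
    ∑ k ∈ Finset.Icc 1 n, thq q n β k * qint q (β k) =
    ∑ k ∈ Finset.Icc 1 n,
      thq q n (β + m • (eps i - eps (i + 1))) k *
        qint q ((β + m • (eps i - eps (i + 1))) k) := by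
  rw [sum_thq_mul_qint, sum_thq_mul_qint,
    sum_add_smul_eps_sub_eps β (by simp; omega) (by simp; omega)]

/-- Lemma 2.1: `Σ_k θ(ε_k,β)[β_k]` is invariant under shifting `β` by
integer multiples of `ε_i - ε_{i+1}`. -/
theorem sum_theta_qint_invariant {K : Type*} [Field K] (q : K)
    (hq0 : q ≠ 0) (hq1 : q ≠ 1) (hqm : q ≠ -1)
    (n i : ℕ) (hi1 : 1 ≤ i) (hi2 : i + 1 ≤ n)
    (β : ℕ → ℤ) (hβ : ∀ k ∈ Finset.Icc 1 n, 0 ≤ β k) (m : ℤ) :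
    ∑ k ∈ Finset.Icc 1 n, thq q n β k * qint q (β k) =
    ∑ k ∈ Finset.Icc 1 n,
      thq q n (β + m • (eps i - eps (i + 1))) k *
        qint q ((β + m • (eps i - eps (i + 1))) k) :=
  sum_theta_qint_invariant_general q n i hi1 hi2 β m
end

section
/- Define operators on the vector space with basis {x^{(β)} : β ∈ ℤ₊ⁿ} by e_n x^{(β)} = [β_n+1](Σ_{i=1}^{n} θ(ε_i,β)[β_i]) x^{(β+ε_n)}, f_n x^{(β)} = −x^{(β−ε_n)} (and 0 if β_n=0), K_n x^{(β)} = q^{Σ_{i=1}^{n}β_i + β_n} x^{(β)}. Then [e_n, f_n] = (K_n − K_n^{-1})/(q − q^{-1}) as operators. -/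
open Finset

section Aux

variable {K : Type*} [Field K] (q : K)

lemma hne_aux (hq0 : q ≠ 0) (hq1 : q ≠ 1) (hqm : q ≠ -1) : q - q⁻¹ ≠ 0 := by
  intro h
  have h2 : q * q = 1 := by
    have := sub_eq_zero.mp h
    field_simp at this
    linear_combination this
  have h3 : (q - 1) * (q + 1) = 0 := by linear_combination h2
  rcases mul_eq_zero.mp h3 with h' | h'
  · exact hq1 (by linear_combination h')
  · exact hqm (by linear_combination h')

lemma qint_mul (hne : q - q⁻¹ ≠ 0) (m : ℤ) :
    (q - q⁻¹) * qint q m = q ^ m - q ^ (-m) := by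
  rw [qint, mul_div_cancel₀ _ hne]

lemma qint_key (hq0 : q ≠ 0) (hne : q - q⁻¹ ≠ 0) (x y : ℤ) :
    qint q x * qint q y - qint q (x - 1) * qint q (y - 1) = qint q (x + y - 1) := by
  have hx : q ^ x ≠ 0 := zpow_ne_zero _ hq0
  have hy : q ^ y ≠ 0 := zpow_ne_zero _ hq0
  apply mul_left_cancel₀ (pow_ne_zero 2 hne)
  have e1 := qint_mul q hne x
  have e2 := qint_mul q hne y
  have e3 := qint_mul q hne (x - 1)
  have e4 := qint_mul q hne (y - 1)
  have e5 := qint_mul q hne (x + y - 1)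
  have expand : ∀ a b : ℤ, q ^ (a + b) = q ^ a * q ^ b := fun a b => zpow_add₀ hq0 a b
  calc (q - q⁻¹) ^ 2 * (qint q x * qint q y - qint q (x - 1) * qint q (y - 1))
      = ((q - q⁻¹) * qint q x) * ((q - q⁻¹) * qint q y)
        - ((q - q⁻¹) * qint q (x - 1)) * ((q - q⁻¹) * qint q (y - 1)) := by ring
    _ = (q ^ x - q ^ (-x)) * (q ^ y - q ^ (-y))
        - (q ^ (x-1) - q ^ (-(x-1))) * (q ^ (y-1) - q ^ (-(y-1))) := by rw [e1, e2, e3, e4]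
    _ = (q - q⁻¹) * (q ^ (x+y-1) - q ^ (-(x+y-1))) := by
        simp only [neg_sub, sub_eq_add_neg, expand, zpow_neg, zpow_one, neg_add, neg_neg]
        field_simp
        ring
    _ = (q - q⁻¹) ^ 2 * qint q (x + y - 1) := by rw [← e5]; ring

lemma qint_step (hq0 : q ≠ 0) (hne : q - q⁻¹ ≠ 0) (S b : ℤ) :
    q ^ b * qint q S + q ^ (-S) * qint q b = qint q (S + b) := by
  have hS : q ^ S ≠ 0 := zpow_ne_zero _ hq0
  have hb : q ^ b ≠ 0 := zpow_ne_zero _ hq0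
  apply mul_left_cancel₀ hne
  have e1 := qint_mul q hne S
  have e2 := qint_mul q hne b
  have e3 := qint_mul q hne (S + b)
  calc (q - q⁻¹) * (q ^ b * qint q S + q ^ (-S) * qint q b)
      = q ^ b * ((q - q⁻¹) * qint q S) + q ^ (-S) * ((q - q⁻¹) * qint q b) := by ring
    _ = q ^ b * (q ^ S - q ^ (-S)) + q ^ (-S) * (q ^ b - q ^ (-b)) := by rw [e1, e2]
    _ = q ^ (S + b) - q ^ (-(S + b)) := by
        simp only [neg_add, zpow_add₀ hq0, zpow_neg]
        field_simp
        ring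
    _ = (q - q⁻¹) * qint q (S + b) := e3.symm

lemma qint_tel (hq0 : q ≠ 0) (hne : q - q⁻¹ ≠ 0) :
    ∀ (n : ℕ) (β : ℕ → ℤ),
      ∑ i ∈ Icc 1 n, thq q n β i * qint q (β i) = qint q (∑ i ∈ Icc 1 n, β i) := by
  intro n
  induction n with
  | zero => intro β; rw [Finset.Icc_eq_empty (by omega)]; simp [qint]
  | succ n ih =>
    intro β
    rw [Finset.sum_Icc_succ_top (Nat.le_add_left 1 n),
        Finset.sum_Icc_succ_top (Nat.le_add_left 1 n)]
    have h1 : ∀ i ∈ Icc 1 n, thq q (n+1) β i * qint q (β i)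
        = q ^ (β (n+1)) * (thq q n β i * qint q (β i)) := by
      intro i hi
      have hi' : i ≤ n := (Finset.mem_Icc.mp hi).2
      have : thq q (n+1) β i = q ^ (β (n+1)) * thq q n β i := by
        unfold thq
        rw [Finset.sum_Icc_succ_top (by omega : i + 1 ≤ n + 1),
          show (∑ s ∈ Icc (i+1) n, β s) + β (n+1) - ∑ s ∈ Ico 1 i, β s
            = β (n+1) + ((∑ s ∈ Icc (i+1) n, β s) - ∑ s ∈ Ico 1 i, β s) by ring,
          zpow_add₀ hq0]
      rw [this]; ring
    rw [Finset.sum_congr rfl h1, ← Finset.mul_sum, ih β]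
    have h2 : thq q (n+1) β (n+1) = q ^ (-(∑ i ∈ Icc 1 n, β i)) := by
      unfold thq
      rw [Finset.Icc_eq_empty (by omega : ¬ (n+1)+1 ≤ n+1), Finset.sum_empty,
        Finset.Ico_add_one_right_eq_Icc]
      norm_num
    rw [h2]
    exact qint_step q hq0 hne _ _

end Aux

theorem enfn_commutator {K V : Type*} [Field K] [AddCommGroup V] [Module K V]
    (q : K) (hq0 : q ≠ 0) (hq1 : q ≠ 1) (hqm : q ≠ -1) (n : ℕ) (hn : 1 ≤ n)
    (X : (ℕ → ℤ) → V)
    (hX0 : ∀ β : ℕ → ℤ, (∃ k ∈ Finset.Icc 1 n, β k < 0) → X β = 0)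
    (en fn Kn Kninv : Module.End K V)
    (hen : ∀ β : ℕ → ℤ, (∀ k ∈ Finset.Icc 1 n, 0 ≤ β k) →
      en (X β) = (qint q (β n + 1) * ∑ i ∈ Finset.Icc 1 n, thq q n β i * qint q (β i)) •
        X (β + eps n))
    (hfn : ∀ β : ℕ → ℤ, (∀ k ∈ Finset.Icc 1 n, 0 ≤ β k) →
      fn (X β) = - X (β - eps n))
    (hKn : ∀ β : ℕ → ℤ, (∀ k ∈ Finset.Icc 1 n, 0 ≤ β k) →
      Kn (X β) = q ^ ((∑ i ∈ Finset.Icc 1 n, β i) + β n) • X β)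
    (hKninv : ∀ β : ℕ → ℤ, (∀ k ∈ Finset.Icc 1 n, 0 ≤ β k) →
      Kninv (X β) = q ^ (-((∑ i ∈ Finset.Icc 1 n, β i) + β n)) • X β) :
    ∀ β : ℕ → ℤ, (∀ k ∈ Finset.Icc 1 n, 0 ≤ β k) →
      (en * fn - fn * en) (X β) = (q - q⁻¹)⁻¹ • ((Kn - Kninv) (X β)) := by
  intro β hβ
  have hne : q - q⁻¹ ≠ 0 := hne_aux q hq0 hq1 hqm
  have hnmem : n ∈ Icc 1 n := Finset.mem_Icc.mpr ⟨hn, le_rfl⟩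
  have hβn : 0 ≤ β n := hβ n hnmem
  have htel := qint_tel q hq0 hne n
  have hβp : ∀ k ∈ Icc 1 n, 0 ≤ (β + eps n) k := by
    intro k hk
    have := hβ k hk
    simp only [Pi.add_apply, eps]
    split <;> omega
  have hsub : β + eps n - eps n = β := by funext k; simp
  have Hfe : fn (en (X β)) =
      -((qint q (β n + 1) * qint q (∑ i ∈ Icc 1 n, β i)) • X β) := by
    rw [hen β hβ, htel β, map_smul, hfn _ hβp, hsub, smul_neg]
  have Hef : en (fn (X β)) =
      -((qint q (β n) * qint q ((∑ i ∈ Icc 1 n, β i) - 1)) • X β) := by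
    rcases eq_or_lt_of_le hβn with h0 | hpos
    · have hz : X (β - eps n) = 0 := hX0 _ ⟨n, hnmem, by simp [eps, ← h0]⟩
      rw [hfn β hβ, hz, neg_zero, map_zero,
        show qint q (β n) = 0 by rw [← h0]; simp [qint]]
      simp
    · have hβm : ∀ k ∈ Icc 1 n, 0 ≤ (β - eps n) k := by
        intro k hk
        have := hβ k hk
        simp only [Pi.sub_apply, eps]
        split_ifs with h
        · subst h; omega
        · omega
      have hadd : β - eps n + eps n = β := by funext k; simp
      have hc1 : (β - eps n) n + 1 = β n := by simp [eps]
      have hc2 : ∑ i ∈ Icc 1 n, (β - eps n) i = (∑ i ∈ Icc 1 n, β i) - 1 := by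
        simp only [Pi.sub_apply, Finset.sum_sub_distrib]
        congr 1
        simp [eps, Finset.sum_ite_eq', hnmem]
      rw [hfn β hβ, map_neg, hen _ hβm, htel _, hadd, hc1, hc2]
  have hkey := qint_key q hq0 hne (β n + 1) (∑ i ∈ Icc 1 n, β i)
  rw [add_sub_cancel_right,
    show β n + 1 + (∑ i ∈ Icc 1 n, β i) - 1 = (∑ i ∈ Icc 1 n, β i) + β n by ring] at hkey
  have hq2 : qint q ((∑ i ∈ Icc 1 n, β i) + β n) =
      (q - q⁻¹)⁻¹ * (q ^ ((∑ i ∈ Icc 1 n, β i) + β n)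
        - q ^ (-((∑ i ∈ Icc 1 n, β i) + β n))) := by
    rw [qint, div_eq_inv_mul]
  simp only [LinearMap.sub_apply, Module.End.mul_apply]
  rw [Hef, Hfe, hKn β hβ, hKninv β hβ]
  match_scalars
  linear_combination hkey + hq2
end

section
/- With e_i x^{(β)} = [β_i+1] x^{(β+ε_i−ε_{i+1})} for 1 ≤ i ≤ n−1 and e_n x^{(β)} = [β_n+1](Σ_{k=1}^{n} θ(ε_k,β)[β_k]) x^{(β+ε_n)}, the operators satisfy the quantum Serre relation e_{n-1}² e_n − (q+q^{-1}) e_{n-1} e_n e_{n-1} + e_n e_{n-1}² = 0. -/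
open Finset

lemma myL1 {K : Type*} [Field K] (q : K) (hq0 : q ≠ 0) (r : ℤ) :
    qint q (r+1) - (q+q⁻¹) * qint q r + qint q (r-1) = 0 := by
  have hA : q ^ r ≠ 0 := zpow_ne_zero _ hq0
  simp only [qint, neg_add, neg_sub, sub_eq_add_neg, zpow_add₀ hq0, zpow_neg, zpow_one]
  field_simp
  ring

set_option maxHeartbeats 1000000 in
lemma myL23 {K : Type*} [Field K] (q : K) (hq0 : q ≠ 0) (hd : q - q⁻¹ ≠ 0) (r p : ℤ) :
    qint q (r+1) * qint q p - (q+q⁻¹) * (qint q r * (q⁻¹ * qint q (p+1)))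
      + qint q (r-1) * (q⁻¹ * q⁻¹ * qint q (p+2))
    + (q ^ (-(p+r)) * (qint q (r+1) * qint q r)
      - (q+q⁻¹) * (q ^ (-(p+r)) * (qint q r * (q⁻¹ * qint q (r-1))))
      + q ^ (-(p+r)) * (qint q (r-1) * (q⁻¹ * q⁻¹ * qint q (r-2)))) = 0 := by
  obtain ⟨a, haa⟩ : ∃ x, q ^ r = x := ⟨_, rfl⟩
  obtain ⟨b, hbb⟩ : ∃ x, q ^ p = x := ⟨_, rfl⟩
  obtain ⟨d, hdd⟩ : ∃ x, q - q⁻¹ = x := ⟨_, rfl⟩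
  have ha : a ≠ 0 := haa ▸ zpow_ne_zero _ hq0
  have hb : b ≠ 0 := hbb ▸ zpow_ne_zero _ hq0
  have hd0 : d ≠ 0 := hdd ▸ hd
  have key : ∀ m : ℤ, qint q m = (q^m * q^m - 1) / (q^m * d) := by
    intro m
    have hm : q ^ m ≠ 0 := zpow_ne_zero _ hq0
    rw [qint, hdd, div_eq_div_iff hd0 (mul_ne_zero hm hd0), zpow_neg]
    field_simp
  have hq2 : ∀ m : ℤ, q ^ (m+1) = q ^ m * q := fun m => zpow_add_one₀ hq0 m
  have hq3 : ∀ m : ℤ, q ^ (m-1) = q ^ m * q⁻¹ := fun m => zpow_sub_one₀ hq0 m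
  have hq4 : ∀ m : ℤ, q ^ (m+2) = q ^ m * q * q := by
    intro m; rw [show m+2 = m+1+1 by ring, hq2, hq2]
  have hq5 : ∀ m : ℤ, q ^ (m-2) = q ^ m * q⁻¹ * q⁻¹ := by
    intro m; rw [show m-2 = m-1-1 by ring, hq3, hq3]
  have hq : q⁻¹ * q = 1 := inv_mul_cancel₀ hq0
  have hqq : (q+q⁻¹) * q = q*q + 1 := by field_simp
  have hg : q ^ (-(p+r)) * (b*a) = 1 := by
    rw [zpow_neg, zpow_add₀ hq0, haa, hbb, inv_mul_cancel₀ (mul_ne_zero hb ha)]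
  have c1 : qint q (r+1) * (a*q*d) = a*a*q*q - 1 := by
    rw [key, hq2, haa]; field_simp
  have c0 : qint q r * (a*d) = a*a - 1 := by
    rw [key, haa]; field_simp
  have cm : qint q (r-1) * (a*q*d) = a*a - q*q := by
    rw [key, hq3, haa]; field_simp
  have cm2 : qint q (r-2) * (a*q*q*d) = a*a - q^4 := by
    rw [key, hq5, haa]; field_simp
  have y0 : qint q p * (b*d) = b*b - 1 := by
    rw [key, hbb]; field_simp
  have y1 : qint q (p+1) * (b*q*d) = b*b*q*q - 1 := by
    rw [key, hq2, hbb]; field_simp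
  have y2 : qint q (p+2) * (b*q*q*d) = b*b*q^4 - 1 := by
    rw [key, hq4, hbb]; field_simp
  obtain ⟨W, hW⟩ : ∃ x, a*a*a*b*q^5*d*d = x := ⟨_, rfl⟩
  have hW0 : W ≠ 0 := by
    rw [← hW]
    exact mul_ne_zero (mul_ne_zero (mul_ne_zero (mul_ne_zero (mul_ne_zero (mul_ne_zero ha ha) ha) hb) (pow_ne_zero 5 hq0)) hd0) hd0
  have h1 : qint q (r+1) * qint q p * W = (a*a*q*q - 1)*(b*b-1)*(a*a*q^4) := by
    rw [← hW]
    linear_combination ((a*a*q^4) * ((qint q p) * (b*d))) * c1 + ((a*a*q^4) * (a*a*q*q - 1)) * y0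
  have h2 : (q+q⁻¹) * (qint q r * (q⁻¹ * qint q (p+1))) * W
      = (q*q+1)*(a*a-1)*(b*b*q*q-1)*(a*a*q*q) := by
    rw [← hW]
    linear_combination ((a*a*q*q) * ((qint q r) * (a*d)) * ((q⁻¹) * (q)) * ((qint q (p+1)) * (b*q*d))) * hqq + ((a*a*q*q) * (q*q + 1) * ((q⁻¹) * (q)) * ((qint q (p+1)) * (b*q*d))) * c0 + ((a*a*q*q) * (q*q + 1) * (a*a - 1) * ((qint q (p+1)) * (b*q*d))) * hq + ((a*a*q*q) * (q*q + 1) * (a*a - 1) * (1)) * y1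
  have h3 : qint q (r-1) * (q⁻¹ * q⁻¹ * qint q (p+2)) * W
      = (a*a-q*q)*(b*b*q^4-1)*(a*a) := by
    rw [← hW]
    linear_combination ((a*a) * ((q⁻¹) * (q)) * ((q⁻¹) * (q)) * ((qint q (p+2)) * (b*q*q*d))) * cm + ((a*a) * (a*a - q*q) * ((q⁻¹) * (q)) * ((qint q (p+2)) * (b*q*q*d))) * hq + ((a*a) * (a*a - q*q) * (1) * ((qint q (p+2)) * (b*q*q*d))) * hq + ((a*a) * (a*a - q*q) * (1) * (1)) * y2
  have h4 : q ^ (-(p+r)) * (qint q (r+1) * qint q r) * W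
      = (a*a*q*q-1)*(a*a-1)*q^4 := by
    rw [← hW]
    linear_combination ((q^4) * ((qint q (r+1)) * (a*q*d)) * ((qint q r) * (a*d))) * hg + ((q^4) * (1) * ((qint q r) * (a*d))) * c1 + ((q^4) * (1) * (a*a*q*q - 1)) * c0
  have h5 : (q+q⁻¹) * (q ^ (-(p+r)) * (qint q r * (q⁻¹ * qint q (r-1)))) * W
      = (q*q+1)*(a*a-1)*(a*a-q*q)*(q*q) := by
    rw [← hW]
    linear_combination ((q*q) * ((q ^ (-(p+r))) * (b*a)) * ((qint q r) * (a*d)) * ((q⁻¹) * (q)) * ((qint q (r-1)) * (a*q*d))) * hqq + ((q*q) * (q*q + 1) * ((qint q r) * (a*d)) * ((q⁻¹) * (q)) * ((qint q (r-1)) * (a*q*d))) * hg + ((q*q) * (q*q + 1) * (1) * ((q⁻¹) * (q)) * ((qint q (r-1)) * (a*q*d))) * c0 + ((q*q) * (q*q + 1) * (1) * (a*a - 1) * ((qint q (r-1)) * (a*q*d))) * hq + ((q*q) * (q*q + 1) * (1) * (a*a - 1) * (1)) * cm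
  have h6 : q ^ (-(p+r)) * (qint q (r-1) * (q⁻¹ * q⁻¹ * qint q (r-2))) * W
      = (a*a-q*q)*(a*a-q^4) := by
    rw [← hW]
    linear_combination ((1) * ((qint q (r-1)) * (a*q*d)) * ((q⁻¹) * (q)) * ((q⁻¹) * (q)) * ((qint q (r-2)) * (a*q*q*d))) * hg + ((1) * (1) * ((q⁻¹) * (q)) * ((q⁻¹) * (q)) * ((qint q (r-2)) * (a*q*q*d))) * cm + ((1) * (1) * (a*a - q*q) * ((q⁻¹) * (q)) * ((qint q (r-2)) * (a*q*q*d))) * hq + ((1) * (1) * (a*a - q*q) * (1) * ((qint q (r-2)) * (a*q*q*d))) * hq + ((1) * (1) * (a*a - q*q) * (1) * (1)) * cm2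
  have hSW : (qint q (r+1) * qint q p - (q+q⁻¹) * (qint q r * (q⁻¹ * qint q (p+1)))
      + qint q (r-1) * (q⁻¹ * q⁻¹ * qint q (p+2))
    + (q ^ (-(p+r)) * (qint q (r+1) * qint q r)
      - (q+q⁻¹) * (q ^ (-(p+r)) * (qint q r * (q⁻¹ * qint q (r-1))))
      + q ^ (-(p+r)) * (qint q (r-1) * (q⁻¹ * q⁻¹ * qint q (r-2))))) * W = 0 := by
    linear_combination h1 - h2 + h3 + h4 - h5 + h6
  exact (mul_eq_zero.mp hSW).resolve_right hW0

lemma sum_eps_set (S : Finset ℕ) (i : ℕ) : ∑ s ∈ S, eps i s = if i ∈ S then 1 else 0 := by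
  simp only [eps]
  exact Finset.sum_ite_eq' S i (fun _ => 1)

set_option maxHeartbeats 1000000 in
lemma sum_key {K : Type*} [Field K] (q : K) (hq0 : q ≠ 0) (hd : q - q⁻¹ ≠ 0)
    (n : ℕ) (hn : 2 ≤ n) (β : ℕ → ℤ) :
    qint q (β n + 1) * (∑ k ∈ Finset.Icc 1 n, thq q n β k * qint q (β k))
    - (q+q⁻¹) * (qint q (β n) * ∑ k ∈ Finset.Icc 1 n,
        thq q n (β + eps (n-1) - eps n) k * qint q ((β + eps (n-1) - eps n) k))
    + qint q (β n - 1) * (∑ k ∈ Finset.Icc 1 n,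
        thq q n (β + eps (n-1) - eps n + eps (n-1) - eps n) k
          * qint q ((β + eps (n-1) - eps n + eps (n-1) - eps n) k)) = 0 := by
  -- general thq shift lemma
  have hthq : ∀ (γ : ℕ → ℤ) (k : ℕ), thq q n (γ + eps (n-1) - eps n) k
      = thq q n γ k * q ^ ((if n-1 ∈ Finset.Icc (k+1) n then (1:ℤ) else 0)
          - (if n ∈ Finset.Icc (k+1) n then (1:ℤ) else 0)
          - ((if n-1 ∈ Finset.Ico 1 k then (1:ℤ) else 0)
            - (if n ∈ Finset.Ico 1 k then (1:ℤ) else 0))) := by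
    intro γ k
    rw [thq, thq, ← zpow_add₀ hq0]
    congr 1
    simp only [Pi.add_apply, Pi.sub_apply, Finset.sum_add_distrib, Finset.sum_sub_distrib,
      sum_eps_set]
    ring
  -- pointwise values
  have hvm1 : (β + eps (n-1) - eps n) (n-1) = β (n-1) + 1 := by
    simp only [Pi.add_apply, Pi.sub_apply, eps]
    split_ifs <;> omega
  have hvn1 : (β + eps (n-1) - eps n) n = β n - 1 := by
    simp only [Pi.add_apply, Pi.sub_apply, eps]
    split_ifs <;> omega
  have hvm2 : (β + eps (n-1) - eps n + eps (n-1) - eps n) (n-1) = β (n-1) + 2 := by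
    simp only [Pi.add_apply, Pi.sub_apply, eps]
    split_ifs <;> omega
  have hvn2 : (β + eps (n-1) - eps n + eps (n-1) - eps n) n = β n - 2 := by
    simp only [Pi.add_apply, Pi.sub_apply, eps]
    split_ifs <;> omega
  -- thq shifts at n-1 and n
  have hq1 : q ^ ((1:ℤ) - 1 - (0 - 0)) = 1 := by norm_num
  have hqm1 : q ^ ((0:ℤ) - 1 - (0 - 0)) = q⁻¹ := by norm_num [zpow_neg_one]
  have hqm1' : q ^ ((0:ℤ) - 0 - (1 - 0)) = q⁻¹ := by norm_num [zpow_neg_one]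
  have memA : ∀ k, 1 ≤ k → k ≤ n-2 → n-1 ∈ Finset.Icc (k+1) n := by
    intro k h1 h2; rw [Finset.mem_Icc]; omega
  have memB : ∀ k, 1 ≤ k → k ≤ n-1 → n ∈ Finset.Icc (k+1) n := by
    intro k h1 h2; rw [Finset.mem_Icc]; omega
  have memC : ∀ k, k ≤ n-1 → n-1 ∉ Finset.Ico 1 k := by
    intro k h2; rw [Finset.mem_Ico]; omega
  have memD : ∀ k, k ≤ n → n ∉ Finset.Ico 1 k := by
    intro k h2; rw [Finset.mem_Ico]; omega
  have memE : n-1 ∉ Finset.Icc (n-1+1) n := by rw [Finset.mem_Icc]; omega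
  have memF : n ∉ Finset.Icc (n+1) n := by rw [Finset.mem_Icc]; omega
  have memG : n-1 ∉ Finset.Icc (n+1) n := by rw [Finset.mem_Icc]; omega
  have memH : n-1 ∈ Finset.Ico 1 n := by rw [Finset.mem_Ico]; omega
  have thm1 : ∀ γ : ℕ → ℤ, thq q n (γ + eps (n-1) - eps n) (n-1) = thq q n γ (n-1) * q⁻¹ := by
    intro γ
    rw [hthq γ (n-1), if_neg memE, if_pos (memB (n-1) (by omega) (by omega)),
      if_neg (memC (n-1) (by omega)), if_neg (memD (n-1) (by omega)), hqm1]
  have thn1 : ∀ γ : ℕ → ℤ, thq q n (γ + eps (n-1) - eps n) n = thq q n γ n * q⁻¹ := by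
    intro γ
    rw [hthq γ n, if_neg memG, if_neg memF, if_pos memH, if_neg (memD n (by omega)), hqm1']
  have thk : ∀ (γ : ℕ → ℤ) k, 1 ≤ k → k ≤ n-2 →
      thq q n (γ + eps (n-1) - eps n) k = thq q n γ k := by
    intro γ k h1 h2
    rw [hthq γ k, if_pos (memA k h1 h2), if_pos (memB k h1 (by omega)),
      if_neg (memC k (by omega)), if_neg (memD k (by omega)), hq1, mul_one]
  -- theta relation between n and n-1
  have hth_n : thq q n β n = thq q n β (n-1) * q ^ (-(β (n-1) + β n)) := by
    rw [thq, thq, ← zpow_add₀ hq0]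
    congr 1
    have h1 : Finset.Icc (n+1) n = ∅ := Finset.Icc_eq_empty (by omega)
    have h2 : Finset.Icc (n-1+1) n = {n} := by
      rw [show n-1+1 = n by omega]; exact Finset.Icc_self n
    have h3 : Finset.Ico 1 n = insert (n-1) (Finset.Ico 1 (n-1)) := by
      ext x; simp only [Finset.mem_Ico, Finset.mem_insert]; omega
    rw [h1, h2, h3, Finset.sum_insert (by rw [Finset.mem_Ico]; omega),
      Finset.sum_empty, Finset.sum_singleton]
    ring
  -- split the sums
  have hsplit : Finset.Icc 1 n = insert (n-1) (insert n (Finset.Icc 1 (n-2))) := by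
    ext x; simp only [Finset.mem_Icc, Finset.mem_insert]; omega
  have hnotm : (n-1) ∉ insert n (Finset.Icc 1 (n-2)) := by
    simp only [Finset.mem_insert, Finset.mem_Icc]; omega
  have hnotn : n ∉ Finset.Icc 1 (n-2) := by rw [Finset.mem_Icc]; omega
  rw [hsplit]
  simp only [Finset.sum_insert hnotm, Finset.sum_insert hnotn]
  -- rest sums coincide
  have hrest1 : ∑ k ∈ Finset.Icc 1 (n-2),
      thq q n (β + eps (n-1) - eps n) k * qint q ((β + eps (n-1) - eps n) k)
      = ∑ k ∈ Finset.Icc 1 (n-2), thq q n β k * qint q (β k) := by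
    refine Finset.sum_congr rfl (fun k hk => ?_)
    obtain ⟨h1, h2⟩ := Finset.mem_Icc.mp hk
    have hv : (β + eps (n-1) - eps n) k = β k := by
      simp only [Pi.add_apply, Pi.sub_apply, eps]
      split_ifs <;> omega
    rw [thk β k h1 h2, hv]
  have hrest2 : ∑ k ∈ Finset.Icc 1 (n-2),
      thq q n (β + eps (n-1) - eps n + eps (n-1) - eps n) k
        * qint q ((β + eps (n-1) - eps n + eps (n-1) - eps n) k)
      = ∑ k ∈ Finset.Icc 1 (n-2), thq q n β k * qint q (β k) := by
    refine Finset.sum_congr rfl (fun k hk => ?_)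
    obtain ⟨h1, h2⟩ := Finset.mem_Icc.mp hk
    have hv : (β + eps (n-1) - eps n + eps (n-1) - eps n) k = β k := by
      simp only [Pi.add_apply, Pi.sub_apply, eps]
      split_ifs <;> omega
    rw [thk _ k h1 h2, thk β k h1 h2, hv]
  rw [hrest1, hrest2]
  rw [thm1 β, thn1 β, thm1 (β + eps (n-1) - eps n), thn1 (β + eps (n-1) - eps n),
    thm1 β, thn1 β]
  rw [hvm1, hvn1, hvm2, hvn2, hth_n]
  linear_combination (thq q n β (n-1)) * myL23 q hq0 hd (β n) (β (n-1))
    + (∑ k ∈ Finset.Icc 1 (n-2), thq q n β k * qint q (β k)) * myL1 q hq0 (β n)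

set_option maxHeartbeats 1000000 in
theorem serre_e {K V : Type*} [Field K] [AddCommGroup V] [Module K V]
    (q : K) (hq0 : q ≠ 0) (hq1 : q ≠ 1) (hqm : q ≠ -1) (n : ℕ) (hn : 2 ≤ n)
    (X : (ℕ → ℤ) → V)
    (hX0 : ∀ β : ℕ → ℤ, (∃ k ∈ Finset.Icc 1 n, β k < 0) → X β = 0)
    (e1 en : Module.End K V)
    (he1 : ∀ β : ℕ → ℤ, (∀ k ∈ Finset.Icc 1 n, 0 ≤ β k) →
      e1 (X β) = qint q (β (n - 1) + 1) • X (β + eps (n - 1) - eps n))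
    (hen : ∀ β : ℕ → ℤ, (∀ k ∈ Finset.Icc 1 n, 0 ≤ β k) →
      en (X β) = (qint q (β n + 1) * ∑ k ∈ Finset.Icc 1 n, thq q n β k * qint q (β k)) •
        X (β + eps n)) :
    ∀ β : ℕ → ℤ, (∀ k ∈ Finset.Icc 1 n, 0 ≤ β k) →
      (e1 * e1 * en - (q + q⁻¹) • (e1 * en * e1) + en * e1 * e1) (X β) = 0 := by
  intro β hβ
  have hd : q - q⁻¹ ≠ 0 := by
    intro h
    have h2 : q * q = 1 := by
      have hq' : q = q⁻¹ := sub_eq_zero.mp h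
      calc q * q = q * q⁻¹ := by rw [← hq']
        _ = 1 := mul_inv_cancel₀ hq0
    have h3 : (q - 1) * (q + 1) = 0 := by linear_combination h2
    rcases mul_eq_zero.mp h3 with h4 | h4
    · exact hq1 (sub_eq_zero.mp h4)
    · exact hqm (eq_neg_of_add_eq_zero_left h4)
  have hmemn : n ∈ Finset.Icc 1 n := Finset.mem_Icc.mpr ⟨by omega, le_refl n⟩
  -- function identities
  have idA : β + eps n + eps (n-1) - eps n = β + eps (n-1) := by
    funext k; simp only [Pi.add_apply, Pi.sub_apply, eps]; split_ifs <;> omega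
  have idC : β + eps (n-1) - eps n + eps n = β + eps (n-1) := by
    funext k; simp only [Pi.add_apply, Pi.sub_apply, eps]; split_ifs <;> omega
  have idE : β + eps (n-1) - eps n + eps (n-1) - eps n + eps n
      = β + eps (n-1) + eps (n-1) - eps n := by
    funext k; simp only [Pi.add_apply, Pi.sub_apply, eps]; split_ifs <;> omega
  -- pointwise values
  have v1 : (β + eps n) (n-1) = β (n-1) := by
    simp only [Pi.add_apply, eps]; split_ifs <;> omega
  have v2 : (β + eps (n-1)) (n-1) = β (n-1) + 1 := by
    simp only [Pi.add_apply, eps]; split_ifs <;> omega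
  have v3 : (β + eps (n-1) - eps n) (n-1) = β (n-1) + 1 := by
    simp only [Pi.add_apply, Pi.sub_apply, eps]; split_ifs <;> omega
  have v4 : (β + eps (n-1) - eps n) n = β n - 1 := by
    simp only [Pi.add_apply, Pi.sub_apply, eps]; split_ifs <;> omega
  have v5 : (β + eps (n-1) - eps n + eps (n-1) - eps n) n = β n - 2 := by
    simp only [Pi.add_apply, Pi.sub_apply, eps]; split_ifs <;> omega
  have vτ : (β + eps (n-1) + eps (n-1) - eps n) n = β n - 1 := by
    simp only [Pi.add_apply, Pi.sub_apply, eps]; split_ifs <;> omega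
  -- nonnegativity
  have hβ1 : ∀ k ∈ Finset.Icc 1 n, 0 ≤ (β + eps n) k := by
    intro k hk; have := hβ k hk; simp only [Pi.add_apply, eps]; split_ifs <;> omega
  have hβ2 : ∀ k ∈ Finset.Icc 1 n, 0 ≤ (β + eps (n-1)) k := by
    intro k hk; have := hβ k hk; simp only [Pi.add_apply, eps]; split_ifs <;> omega
  simp only [LinearMap.sub_apply, LinearMap.add_apply, LinearMap.smul_apply,
    Module.End.mul_apply]
  by_cases h0 : β n = 0
  · -- everything vanishes
    have hXz : X (β + eps (n-1) - eps n) = 0 :=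
      hX0 (β + eps (n-1) - eps n) ⟨n, hmemn, by rw [v4]; omega⟩
    have hXz2 : X (β + eps (n-1) + eps (n-1) - eps n) = 0 :=
      hX0 (β + eps (n-1) + eps (n-1) - eps n) ⟨n, hmemn, by rw [vτ]; omega⟩
    have T1 : e1 (e1 (en (X β))) = 0 := by
      rw [hen β hβ, map_smul, he1 _ hβ1, map_smul, map_smul, idA, he1 _ hβ2, hXz2]
      simp only [smul_zero]
    have hz1 : e1 (X β) = 0 := by rw [he1 β hβ, hXz, smul_zero]
    rw [T1, hz1]
    simp only [map_zero, smul_zero, zero_sub, neg_zero, zero_add]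
  · have h1 : 1 ≤ β n := by have := hβ n hmemn; omega
    have hβ3 : ∀ k ∈ Finset.Icc 1 n, 0 ≤ (β + eps (n-1) - eps n) k := by
      intro k hk
      have hk0 := hβ k hk
      rcases eq_or_ne k n with rfl | hkn
      · rw [v4]; omega
      · rcases eq_or_ne k (n-1) with rfl | hkm
        · rw [v3]; omega
        · have hv : (β + eps (n-1) - eps n) k = β k := by
            simp only [Pi.add_apply, Pi.sub_apply, eps, if_neg hkm, if_neg hkn]; ring
          rw [hv]; omega
    have TA : e1 (e1 (en (X β)))
        = (qint q (β n + 1) * ∑ k ∈ Finset.Icc 1 n, thq q n β k * qint q (β k)) •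
          (qint q (β (n-1) + 1) • (qint q (β (n-1) + 1 + 1) •
            X (β + eps (n-1) + eps (n-1) - eps n))) := by
      rw [hen β hβ, map_smul, he1 _ hβ1, v1, map_smul, map_smul, idA, he1 _ hβ2, v2]
    have TB : e1 (en (e1 (X β)))
        = qint q (β (n-1) + 1) • ((qint q (β n - 1 + 1) * ∑ k ∈ Finset.Icc 1 n,
            thq q n (β + eps (n-1) - eps n) k * qint q ((β + eps (n-1) - eps n) k)) •
          (qint q (β (n-1) + 1 + 1) • X (β + eps (n-1) + eps (n-1) - eps n))) := by
      rw [he1 β hβ, map_smul, hen _ hβ3, v4, map_smul, map_smul, idC, he1 _ hβ2, v2]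
    have TC : en (e1 (e1 (X β)))
        = qint q (β (n-1) + 1) • (qint q (β (n-1) + 1 + 1) •
          ((qint q (β n - 2 + 1) * ∑ k ∈ Finset.Icc 1 n,
            thq q n (β + eps (n-1) - eps n + eps (n-1) - eps n) k
              * qint q ((β + eps (n-1) - eps n + eps (n-1) - eps n) k)) •
            X (β + eps (n-1) + eps (n-1) - eps n))) := by
      rw [he1 β hβ, map_smul, he1 _ hβ3, v3, map_smul, map_smul]
      by_cases h2 : 2 ≤ β n
      · have hβ4 : ∀ k ∈ Finset.Icc 1 n,
            0 ≤ (β + eps (n-1) - eps n + eps (n-1) - eps n) k := by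
          intro k hk
          have hk0 := hβ k hk
          rcases eq_or_ne k n with rfl | hkn
          · rw [v5]; omega
          · rcases eq_or_ne k (n-1) with rfl | hkm
            · have hv : (β + eps (n-1) - eps n + eps (n-1) - eps n) (n-1)
                  = β (n-1) + 2 := by
                simp only [Pi.add_apply, Pi.sub_apply, eps]; split_ifs <;> omega
              rw [hv]; omega
            · have hv : (β + eps (n-1) - eps n + eps (n-1) - eps n) k = β k := by
                simp only [Pi.add_apply, Pi.sub_apply, eps, if_neg hkm, if_neg hkn]; ring
              rw [hv]; omega
        rw [hen _ hβ4, v5, idE]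
      · have hXz3 : X (β + eps (n-1) - eps n + eps (n-1) - eps n) = 0 :=
          hX0 _ ⟨n, hmemn, by rw [v5]; omega⟩
        have hq00 : qint q (β n - 2 + 1) = 0 := by
          rw [show β n - 2 + 1 = 0 by omega]
          simp [qint]
        simp [hXz3, hq00]
    rw [TA, TB, TC, show β n - 1 + 1 = β n by ring,
      show β (n-1) + 1 + 1 = β (n-1) + 2 by ring, show β n - 2 + 1 = β n - 1 by ring]
    have hsum := sum_key q hq0 hd n hn β
    simp only [smul_smul]
    have collapse : ∀ (x : V) (A B C : K), (A - (q+q⁻¹)*B + C = 0) →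
        A • x - ((q+q⁻¹) * B) • x + C • x = 0 := by
      intro x A B C h
      rw [← sub_smul, ← add_smul, h, zero_smul]
    apply collapse
    linear_combination (qint q (β (n-1) + 1) * qint q (β (n-1) + 2)) * hsum
end

section
/- With f_{n-1} x^{(β)} = [β_n+1] x^{(β−ε_{n-1}+ε_n)} and f_n x^{(β)} = −x^{(β−ε_n)}, the operators satisfy the quantum Serre relation f_{n-1}² f_n − (q+q^{-1}) f_{n-1} f_n f_{n-1} + f_n f_{n-1}² = 0. -/
open Finset

/-!
Each of the three words sends `x^{(β)}` to a multiple of `x^{(β - 2ε_{n-1} + ε_n)}`, the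
coefficients being `-[b][b+1]`, `-[b+1]²` and `-[b+1][b+2]` with `b = β_n`, so the relation
reduces to the recurrence `[b] + [b+2] = (q + q⁻¹)[b+1]`. To compose the operators freely we
first extend their defining formulas to all `β ∈ ℤⁿ`: this is automatic because `x^{(β)} = 0`
for negative `β`, except where `f_{n-1}` raises `β_n = -1` to `0`, and there the coefficient
`[0]` vanishes.
-/

@[simp]
theorem eps_apply_self (i : ℕ) : eps i i = 1 := if_pos rfl

@[simp]
theorem eps_apply_of_ne {i k : ℕ} (h : k ≠ i) : eps i k = 0 := if_neg h

section QInt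

variable {K : Type*} [Field K]

@[simp]
theorem qint_zero (q : K) : qint q 0 = 0 := by
  simp [qint]

theorem qint_add_qint_add_two (q : K) (c : ℤ) :
    qint q c + qint q (c + 2) = (q + q⁻¹) * qint q (c + 1) := by
  by_cases hden : q - q⁻¹ = 0
  · simp [qint, hden]
  -- otherwise `q ≠ 0`, since `0 - 0⁻¹ = 0`
  have hq : q ≠ 0 := by rintro rfl; simp at hden
  simp only [qint, zpow_add₀ hq, zpow_neg, zpow_two, zpow_one]
  field_simp
  ring

end QInt

section Extension

variable {K V : Type*} [Field K] [AddCommGroup V] [Module K V]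

theorem apply_eq_neg_sub_eps_of_eq_on_nonneg {n j : ℕ} (X : (ℕ → ℤ) → V)
    (hX0 : ∀ β : ℕ → ℤ, (∃ k ∈ Icc 1 n, β k < 0) → X β = 0) (f : Module.End K V)
    (hf : ∀ β : ℕ → ℤ, (∀ k ∈ Icc 1 n, 0 ≤ β k) → f (X β) = - X (β - eps j))
    (γ : ℕ → ℤ) : f (X γ) = - X (γ - eps j) := by
  by_cases hγ : ∀ k ∈ Icc 1 n, 0 ≤ γ k
  · exact hf γ hγ
  obtain ⟨k, hk, hneg⟩ : ∃ k ∈ Icc 1 n, γ k < 0 := by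
    simpa only [not_forall, not_le, exists_prop] using hγ
  have hlt : (γ - eps j) k < 0 := by
    simp only [Pi.sub_apply, eps]
    split_ifs <;> omega
  rw [hX0 γ ⟨k, hk, hneg⟩, hX0 _ ⟨k, hk, hlt⟩, map_zero, neg_zero]

theorem apply_eq_qint_smul_of_eq_on_nonneg {n i j : ℕ} (hj : j ∈ Icc 1 n) (hij : i ≠ j) (q : K)
    (X : (ℕ → ℤ) → V) (hX0 : ∀ β : ℕ → ℤ, (∃ k ∈ Icc 1 n, β k < 0) → X β = 0)
    (f : Module.End K V)
    (hf : ∀ β : ℕ → ℤ, (∀ k ∈ Icc 1 n, 0 ≤ β k) →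
      f (X β) = qint q (β j + 1) • X (β - eps i + eps j))
    (γ : ℕ → ℤ) : f (X γ) = qint q (γ j + 1) • X (γ - eps i + eps j) := by
  by_cases hγ : ∀ k ∈ Icc 1 n, 0 ≤ γ k
  · exact hf γ hγ
  obtain ⟨k, hk, hneg⟩ : ∃ k ∈ Icc 1 n, γ k < 0 := by
    simpa only [not_forall, not_le, exists_prop] using hγ
  rw [hX0 γ ⟨k, hk, hneg⟩, map_zero]
  by_cases hkj : k = j
  · subst hkj
    obtain hγk | hγk : γ k = -1 ∨ γ k + 1 < 0 := by omega
    · rw [hγk, neg_add_cancel, qint_zero, zero_smul]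
    · rw [hX0 _ ⟨k, hk, by simp [eps, hij.symm]; omega⟩, smul_zero]
  · rw [hX0 _ ⟨k, hk, by simp only [Pi.add_apply, Pi.sub_apply, eps]; split_ifs <;> omega⟩,
      smul_zero]

end Extension

theorem serre_relation_apply {K V : Type*} [Field K] [AddCommGroup V] [Module K V]
    {i j : ℕ} (hij : i ≠ j) (q : K) (X : (ℕ → ℤ) → V) (e f : Module.End K V)
    (he : ∀ β, e (X β) = qint q (β j + 1) • X (β - eps i + eps j))
    (hf : ∀ β, f (X β) = - X (β - eps j)) (β : ℕ → ℤ) :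
    (e * e * f - (q + q⁻¹) • (e * f * e) + f * e * e) (X β) = 0 := by
  simp only [LinearMap.add_apply, LinearMap.sub_apply, LinearMap.smul_apply,
    Module.End.mul_apply, he, hf, map_neg, map_smul, smul_neg, smul_smul]
  have hji : j ≠ i := hij.symm
  have h₁ : β - eps j - eps i + eps j - eps i + eps j = β - eps i - eps i + eps j := by abel
  have h₂ : β - eps i + eps j - eps i + eps j - eps j = β - eps i - eps i + eps j := by abel
  simp only [h₁, h₂, Pi.add_apply, Pi.sub_apply, eps_apply_self, eps_apply_of_ne hji,
    sub_zero, sub_add_cancel, add_sub_cancel_right, add_assoc, one_add_one_eq_two]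
  match_scalars
  linear_combination (-qint q (β j + 1)) * qint_add_qint_add_two q (β j)

theorem serre_f_general {K V : Type*} [Field K] [AddCommGroup V] [Module K V]
    (q : K) (n : ℕ) (hn : 2 ≤ n)
    (X : (ℕ → ℤ) → V)
    (hX0 : ∀ β : ℕ → ℤ, (∃ k ∈ Finset.Icc 1 n, β k < 0) → X β = 0)
    (f1 fn : Module.End K V)
    (hf1 : ∀ β : ℕ → ℤ, (∀ k ∈ Finset.Icc 1 n, 0 ≤ β k) →
      f1 (X β) = qint q (β n + 1) • X (β - eps (n - 1) + eps n))
    (hfn : ∀ β : ℕ → ℤ, (∀ k ∈ Finset.Icc 1 n, 0 ≤ β k) →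
      fn (X β) = - X (β - eps n)) :
    ∀ β : ℕ → ℤ, (∀ k ∈ Finset.Icc 1 n, 0 ≤ β k) →
      (f1 * f1 * fn - (q + q⁻¹) • (f1 * fn * f1) + fn * f1 * f1) (X β) = 0 := by
  intro β _
  have hne : n - 1 ≠ n := by omega
  have hmem : n ∈ Icc 1 n := mem_Icc.mpr ⟨by omega, le_rfl⟩
  exact serre_relation_apply hne q X f1 fn
    (apply_eq_qint_smul_of_eq_on_nonneg hmem hne q X hX0 f1 hf1)
    (apply_eq_neg_sub_eps_of_eq_on_nonneg X hX0 fn hfn) β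

theorem serre_f {K V : Type*} [Field K] [AddCommGroup V] [Module K V]
    (q : K) (hq0 : q ≠ 0) (hq1 : q ≠ 1) (hqm : q ≠ -1) (n : ℕ) (hn : 2 ≤ n)
    (X : (ℕ → ℤ) → V)
    (hX0 : ∀ β : ℕ → ℤ, (∃ k ∈ Finset.Icc 1 n, β k < 0) → X β = 0)
    (f1 fn : Module.End K V)
    (hf1 : ∀ β : ℕ → ℤ, (∀ k ∈ Finset.Icc 1 n, 0 ≤ β k) →
      f1 (X β) = qint q (β n + 1) • X (β - eps (n - 1) + eps n))
    (hfn : ∀ β : ℕ → ℤ, (∀ k ∈ Finset.Icc 1 n, 0 ≤ β k) →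
      fn (X β) = - X (β - eps n)) :
    ∀ β : ℕ → ℤ, (∀ k ∈ Finset.Icc 1 n, 0 ≤ β k) →
      (f1 * f1 * fn - (q + q⁻¹) • (f1 * fn * f1) + fn * f1 * f1) (X β) = 0 :=
  serre_f_general q n hn X hX0 f1 fn hf1 hfn
end

section
/- With e_i x^{(β)} = [β_i+1] x^{(β+ε_i−ε_{i+1})} (1 ≤ i ≤ n−2) and e_n x^{(β)} = [β_n+1](Σ_{k=1}^{n} θ(ε_k,β)[β_k]) x^{(β+ε_n)}, one has e_i e_n = e_n e_i for all 1 ≤ i ≤ n−2. -/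
open Finset

/-!
The operator `e_i` moves `x^{(β)}` to `x^{(β + ε_i - ε_{i+1})}` and `e_n` moves it to
`x^{(β + ε_n)}`; both composites land on the same basis vector. Since `i, i + 1 ≠ n`, the factor
`[β_i + 1]` of `e_i` does not see `ε_n` and the factor `[β_n + 1]` of `e_n` does not see
`ε_i - ε_{i+1}`. What remains is that the weight `Σ_k θ(ε_k, β)[β_k]` is invariant under
`β ↦ β + ε_i - ε_{i+1}`: only the terms `k = i, i + 1` change, each `θ` exponent drops by one,
and the two changes cancel by a telescoping identity of quantum integers. When `β_{i+1} = 0`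
both composites vanish instead, because they pass through a multi-index with a negative entry.
-/

theorem zpow_mul_qint_succ_add_zpow_mul_qint_pred {K : Type*} [Field K] {q : K} (hq : q ≠ 0)
    (E a b : ℤ) :
    q ^ (E - 1) * qint q (a + 1) + q ^ (E - a - b - 1) * qint q (b - 1)
      = q ^ E * qint q a + q ^ (E - a - b) * qint q b := by
  simp only [qint, mul_div_assoc', ← add_div]
  -- both numerators telescope to `q^(E+a) - q^(E-a-2b)`
  congr 1
  simp only [zpow_add₀ hq, zpow_sub₀ hq, zpow_neg, zpow_one, neg_add, neg_sub]
  field_simp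
  ring

section Weight

def thqExp (n : ℕ) (β : ℕ → ℤ) (k : ℕ) : ℤ :=
  (∑ s ∈ Icc (k + 1) n, β s) - ∑ s ∈ Ico 1 k, β s

def thetaSum {K : Type*} [Field K] (q : K) (n : ℕ) (β : ℕ → ℤ) : K :=
  ∑ k ∈ Icc 1 n, thq q n β k * qint q (β k)

variable {n : ℕ}

theorem thqExp_add (β γ : ℕ → ℤ) (k : ℕ) :
    thqExp n (β + γ) k = thqExp n β k + thqExp n γ k := by
  simp only [thqExp, Pi.add_apply, sum_add_distrib]
  ring

theorem thqExp_eps_sub_eps_succ {i : ℕ} (hi : 1 ≤ i) (hin : i + 1 ≤ n) (k : ℕ) :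
    thqExp n (eps i - eps (i + 1)) k = if k = i ∨ k = i + 1 then -1 else 0 := by
  simp only [thqExp, eps, Pi.sub_apply, sum_sub_distrib, sum_ite_eq', mem_Icc, mem_Ico]
  split_ifs <;> omega

theorem thqExp_succ {i : ℕ} (hi : 1 ≤ i) (hin : i + 1 ≤ n) (β : ℕ → ℤ) :
    thqExp n β (i + 1) = thqExp n β i - β i - β (i + 1) := by
  have hIcc : Icc (i + 1) n = insert (i + 1) (Icc (i + 1 + 1) n) := by
    ext x; simp only [mem_insert, mem_Icc]; omega
  have hIco : Ico 1 (i + 1) = insert i (Ico 1 i) := by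
    ext x; simp only [mem_insert, mem_Ico]; omega
  simp only [thqExp, hIcc, hIco, sum_insert (show i + 1 ∉ Icc (i + 1 + 1) n by simp),
    sum_insert (show i ∉ Ico 1 i by simp)]
  ring

theorem thetaSum_add_eps_sub_eps_succ {K : Type*} [Field K] {q : K} (hq : q ≠ 0) {i : ℕ}
    (hi : 1 ≤ i) (hin : i + 1 ≤ n) (β : ℕ → ℤ) :
    thetaSum q n (β + eps i - eps (i + 1)) = thetaSum q n β := by
  set β' := β + eps i - eps (i + 1) with hβ'
  have hexp (k : ℕ) : thqExp n β' k = thqExp n β k + if k = i ∨ k = i + 1 then -1 else 0 := by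
    rw [hβ', add_sub_assoc, thqExp_add, thqExp_eps_sub_eps_succ hi hin]
  have hthq (γ : ℕ → ℤ) (k : ℕ) : thq q n γ k = q ^ thqExp n γ k := rfl
  rw [thetaSum, thetaSum, ← sub_eq_zero, ← sum_sub_distrib,
    sum_eq_add_of_mem i (i + 1) (mem_Icc.2 ⟨hi, by omega⟩) (mem_Icc.2 ⟨by omega, hin⟩)
      (by omega)]
  · have hexp_self : thqExp n β' i = thqExp n β i - 1 := by
      rw [hexp, if_pos (Or.inl rfl)]; ring
    have hexp_succ : thqExp n β' (i + 1) = thqExp n β i - β i - β (i + 1) - 1 := by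
      rw [hexp, if_pos (Or.inr rfl), thqExp_succ hi hin]; ring
    have hβ'_self : β' i = β i + 1 := by simp [β', eps]
    have hβ'_succ : β' (i + 1) = β (i + 1) - 1 := by simp [β', eps]
    rw [hthq, hthq, hthq, hthq, hexp_self, hexp_succ, thqExp_succ hi hin, hβ'_self, hβ'_succ]
    linear_combination
      zpow_mul_qint_succ_add_zpow_mul_qint_pred hq (thqExp n β i) (β i) (β (i + 1))
  · rintro k - ⟨hki, hki1⟩
    simp [β', hthq, hexp, eps, hki, hki1]

end Weight

section Shifts

variable {n : ℕ} {β : ℕ → ℤ}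

theorem nonneg_add_eps (hβ : ∀ k ∈ Icc 1 n, 0 ≤ β k) (j : ℕ) :
    ∀ k ∈ Icc 1 n, 0 ≤ (β + eps j) k := fun k hk => by
  have := hβ k hk
  simp only [Pi.add_apply, eps]
  split_ifs <;> omega

theorem nonneg_add_eps_sub_eps_succ (hβ : ∀ k ∈ Icc 1 n, 0 ≤ β k) {i : ℕ}
    (hpos : 0 < β (i + 1)) : ∀ k ∈ Icc 1 n, 0 ≤ (β + eps i - eps (i + 1)) k := fun k hk => by
  have := hβ k hk
  simp only [Pi.add_apply, Pi.sub_apply, eps]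
  split_ifs <;> subst_vars <;> omega

end Shifts

theorem ei_en_commute_general {K V : Type*} [Field K] [AddCommGroup V] [Module K V]
    (q : K) (hq0 : q ≠ 0) (n : ℕ)
    (X : (ℕ → ℤ) → V)
    (hX0 : ∀ β : ℕ → ℤ, (∃ k ∈ Finset.Icc 1 n, β k < 0) → X β = 0)
    (en : Module.End K V) (e : ℕ → Module.End K V)
    (he : ∀ i, 1 ≤ i → i + 2 ≤ n → ∀ β : ℕ → ℤ, (∀ k ∈ Finset.Icc 1 n, 0 ≤ β k) →
      e i (X β) = qint q (β i + 1) • X (β + eps i - eps (i + 1)))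
    (hen : ∀ β : ℕ → ℤ, (∀ k ∈ Finset.Icc 1 n, 0 ≤ β k) →
      en (X β) = (qint q (β n + 1) * ∑ k ∈ Finset.Icc 1 n, thq q n β k * qint q (β k)) •
        X (β + eps n)) :
    ∀ i, 1 ≤ i → i + 2 ≤ n → ∀ β : ℕ → ℤ, (∀ k ∈ Finset.Icc 1 n, 0 ≤ β k) →
      (e i * en) (X β) = (en * e i) (X β) := by
  intro i hi hin β hβ
  have hi1 : i + 1 ∈ Icc 1 n := mem_Icc.2 ⟨by omega, by omega⟩
  have hi_ne : i ≠ n := by omega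
  have hi1_ne : i + 1 ≠ n := by omega
  rw [Module.End.mul_apply, Module.End.mul_apply, hen β hβ, map_smul,
    he i hi hin _ (nonneg_add_eps hβ n), he i hi hin β hβ, map_smul]
  rcases (hβ (i + 1) hi1).eq_or_lt with hzero | hpos
  · have hX (γ : ℕ → ℤ) (hγ : γ (i + 1) = 0) : X (γ + eps i - eps (i + 1)) = 0 :=
      hX0 _ ⟨i + 1, hi1, by simp [eps, hγ]⟩
    rw [hX β hzero.symm, hX (β + eps n) (by simp [eps, ← hzero, hi1_ne]), smul_zero, smul_zero,
      map_zero, smul_zero]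
  · have hS := thetaSum_add_eps_sub_eps_succ hq0 hi (by omega : i + 1 ≤ n) β
    rw [thetaSum, thetaSum] at hS
    have hpath : β + eps n + eps i - eps (i + 1) = β + eps i - eps (i + 1) + eps n := by abel
    rw [hen _ (nonneg_add_eps_sub_eps_succ hβ hpos), hS, smul_smul, smul_smul, hpath]
    congr 1
    simp [eps, hi_ne, hi_ne.symm, hi1_ne.symm]
    ring

theorem ei_en_commute {K V : Type*} [Field K] [AddCommGroup V] [Module K V]
    (q : K) (hq0 : q ≠ 0) (hq1 : q ≠ 1) (hqm : q ≠ -1) (n : ℕ) (hn : 3 ≤ n)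
    (X : (ℕ → ℤ) → V)
    (hX0 : ∀ β : ℕ → ℤ, (∃ k ∈ Finset.Icc 1 n, β k < 0) → X β = 0)
    (en : Module.End K V) (e : ℕ → Module.End K V)
    (he : ∀ i, 1 ≤ i → i + 2 ≤ n → ∀ β : ℕ → ℤ, (∀ k ∈ Finset.Icc 1 n, 0 ≤ β k) →
      e i (X β) = qint q (β i + 1) • X (β + eps i - eps (i + 1)))
    (hen : ∀ β : ℕ → ℤ, (∀ k ∈ Finset.Icc 1 n, 0 ≤ β k) →
      en (X β) = (qint q (β n + 1) * ∑ k ∈ Finset.Icc 1 n, thq q n β k * qint q (β k)) •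
        X (β + eps n)) :
    ∀ i, 1 ≤ i → i + 2 ≤ n → ∀ β : ℕ → ℤ, (∀ k ∈ Finset.Icc 1 n, 0 ≤ β k) →
      (e i * en) (X β) = (en * e i) (X β) :=
  ei_en_commute_general q hq0 n X hX0 en e he hen
end

section
/- The quantum divided power algebra multiplication x^{(α)} x^{(β)} = q^{α*β} [α+β choose α] x^{(α+β)} is associative: for all α, β, γ ∈ ℤ₊ⁿ, (x^{(α)} x^{(β)}) x^{(γ)} = x^{(α)} (x^{(β)} x^{(γ)}). Equivalently, q^{α*β}[α+β choose α] q^{(α+β)*γ}[α+β+γ choose α+β] = q^{β*γ}[β+γ choose β] q^{α*(β+γ)}[α+β+γ choose α], where [a+b choose a] := Π_i [a_i+b_i]!/([a_i]![b_i]!) is the product of Gaussian binomial coefficients. -/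
open Finset

/-- The quantum factorial `[m]! := [m][m-1]⋯[1]`. -/
def qfact {K : Type*} [Field K] (q : K) : ℕ → K
  | 0 => 1
  | m + 1 => qint q ((m : ℤ) + 1) * qfact q m

/-- The q-multinomial `[α+β choose α] := Π_i [α_i+β_i]!/([α_i]![β_i]!)`. -/
def qmultinom {K : Type*} [Field K] (q : K) (n : ℕ) (a b : ℕ → ℕ) : K :=
  ∏ i ∈ Finset.Icc 1 n, qfact q (a i + b i) / (qfact q (a i) * qfact q (b i))

/-- The product `α * β := Σ_{j=1}^{n-1} Σ_{i>j} α_i β_j` on `ℤ₊`-tuples. -/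
def starn (n : ℕ) (a b : ℕ → ℕ) : ℕ :=
  ∑ j ∈ Finset.Ico 1 n, ∑ i ∈ Finset.Icc (j + 1) n, a i * b j


lemma qfact_add_eq_zero {K : Type*} [Field K] (q : K) {a : ℕ} (h : qfact q a = 0) (b : ℕ) :
    qfact q (a + b) = 0 := by
  induction b with
  | zero => simpa using h
  | succ b ih => rw [show a + (b + 1) = (a + b) + 1 from rfl, qfact, ih, mul_zero]

lemma qdp_key {K : Type*} [Field K] (q : K) (a b c : ℕ) :
    qfact q (a + b) / (qfact q a * qfact q b) *
      (qfact q (a + b + c) / (qfact q (a + b) * qfact q c)) =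
    qfact q (b + c) / (qfact q b * qfact q c) *
      (qfact q (a + b + c) / (qfact q a * qfact q (b + c))) := by
  by_cases hA : qfact q (a + b) = 0
  · have hF : qfact q (a + b + c) = 0 := qfact_add_eq_zero q hA c
    rw [hA, hF]; simp
  by_cases hB : qfact q (b + c) = 0
  · have hF : qfact q (a + b + c) = 0 := by
      rw [show a + b + c = (b + c) + a by ring]; exact qfact_add_eq_zero q hB a
    rw [hB, hF]; simp
  · have ha : qfact q a ≠ 0 := fun h => hA (qfact_add_eq_zero q h b)
    have hb : qfact q b ≠ 0 := fun h => hB (qfact_add_eq_zero q h c)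
    have hc : qfact q c ≠ 0 := fun h => hB (by
      rw [show b + c = c + b by ring]; exact qfact_add_eq_zero q h b)
    field_simp

/-- Associativity of the quantum divided power algebra multiplication,
in its equivalent scalar form. -/
theorem qdp_assoc {K : Type*} [Field K] (q : K) (hq0 : q ≠ 0) (hq1 : q ≠ 1) (hqm : q ≠ -1)
    (n : ℕ) (α β γ : ℕ → ℕ) :
    q ^ starn n α β * qmultinom q n α β *
        (q ^ starn n (α + β) γ * qmultinom q n (α + β) γ) =
      q ^ starn n β γ * qmultinom q n β γ *
        (q ^ starn n α (β + γ) * qmultinom q n α (β + γ)) := by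
  have hs : starn n α β + starn n (α + β) γ = starn n β γ + starn n α (β + γ) := by
    simp only [starn, Pi.add_apply, add_mul, mul_add, Finset.sum_add_distrib]
    ring
  have hm : qmultinom q n α β * qmultinom q n (α + β) γ =
      qmultinom q n β γ * qmultinom q n α (β + γ) := by
    unfold qmultinom
    rw [← Finset.prod_mul_distrib, ← Finset.prod_mul_distrib]
    refine Finset.prod_congr rfl fun i _ => ?_
    simpa [Pi.add_apply, add_assoc] using qdp_key q (α i) (β i) (γ i)
  calc q ^ starn n α β * qmultinom q n α β *
        (q ^ starn n (α + β) γ * qmultinom q n (α + β) γ)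
      = q ^ (starn n α β + starn n (α + β) γ) *
        (qmultinom q n α β * qmultinom q n (α + β) γ) := by rw [pow_add]; ring
    _ = q ^ (starn n β γ + starn n α (β + γ)) *
        (qmultinom q n β γ * qmultinom q n α (β + γ)) := by rw [hs, hm]
    _ = _ := by rw [pow_add]; ring
end

section
/- For operators e_{s,s+1} x^{(β)} = [β_s+1] x^{(β+ε_s−ε_{s+1})} and e_{s+1,n+1} x^{(β)} = q^{-Σ_{i=s+2}^{n} β_i}[β_{s+1}+1](Σ_{i=1}^{n} θ(ε_i,β)[β_i]) x^{(β+ε_{s+1})} with 1 ≤ s < n, the q-bracket [e_{s,s+1}, e_{s+1,n+1}]_q := e_{s,s+1} e_{s+1,n+1} − q e_{s+1,n+1} e_{s,s+1} acts on x^{(β)} as q^{-Σ_{i=s+1}^{n} β_i}[β_s+1](Σ_{i=1}^{n} θ(ε_i,β)[β_i]) x^{(β+ε_s)}. -/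
open Finset

section Aux

variable {K : Type*} [Field K]

lemma aux_hd (q : K) (hq0 : q ≠ 0) (hq1 : q ≠ 1) (hqm : q ≠ -1) : q - q⁻¹ ≠ 0 := by
  intro h
  have h1 : q = q⁻¹ := sub_eq_zero.mp h
  have h2 : q * q = 1 := by nth_rewrite 2 [h1]; exact mul_inv_cancel₀ hq0
  have h3 : (q - 1) * (q + 1) = 0 := by
    have : (q - 1) * (q + 1) = q * q - 1 := by ring
    rw [this, h2, sub_self]
  rcases mul_eq_zero.mp h3 with h | h
  · exact hq1 (by rwa [sub_eq_zero] at h)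
  · exact hqm (eq_neg_of_add_eq_zero_left h)

lemma aux_qint_succ (q : K) (hq0 : q ≠ 0) (hd : q - q⁻¹ ≠ 0) (m : ℤ) :
    qint q (m + 1) = q * qint q m + q ^ (-m) := by
  have hnum : q ^ (m + 1) - q ^ (-(m + 1)) =
      q * (q ^ m - q ^ (-m)) + q ^ (-m) * (q - q⁻¹) := by
    rw [zpow_add_one₀ hq0, show -(m+1) = -m + (-1) by ring, zpow_add₀ hq0, zpow_neg_one]
    ring
  rw [qint, qint, hnum, add_div, mul_div_assoc, mul_div_assoc, div_self hd, mul_one]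

lemma aux_qint_one (q : K) (hd : q - q⁻¹ ≠ 0) : qint q 1 = 1 := by
  rw [qint, zpow_one, zpow_neg, zpow_one]
  exact div_self hd

lemma aux_sum_Icc_bot (f : ℕ → ℤ) (a b : ℕ) (h : a ≤ b) :
    ∑ i ∈ Icc a b, f i = f a + ∑ i ∈ Icc (a + 1) b, f i := by
  rw [← Finset.Ioc_insert_left h, Finset.sum_insert (by simp)]
  congr 1
  rw [← Finset.Icc_add_one_left_eq_Ioc]

lemma aux_S_inv (q : K) (hq0 : q ≠ 0) (n s : ℕ)
    (hs1 : 1 ≤ s) (hs2 : s < n) (β : ℕ → ℤ) :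
    ∑ i ∈ Icc 1 n, thq q n (β + eps s - eps (s+1)) i * qint q ((β + eps s - eps (s+1)) i)
      = ∑ i ∈ Icc 1 n, thq q n β i * qint q (β i) := by
  set γ := β + eps s - eps (s+1) with hγ
  have happ : ∀ k, γ k = β k + (if k = s then 1 else 0) - (if k = s+1 then 1 else 0) := by
    intro k; simp [hγ, eps]
  have hsum : ∀ F : Finset ℕ, ∑ t ∈ F, γ t =
      ∑ t ∈ F, β t + (if s ∈ F then (1:ℤ) else 0) - (if s+1 ∈ F then (1:ℤ) else 0) := by
    intro F
    simp only [happ, Finset.sum_sub_distrib, Finset.sum_add_distrib, Finset.sum_ite_eq']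
  have hins : Icc 1 n = insert s (insert (s+1) (Icc 1 n \ {s, s+1})) := by
    ext i
    simp only [Finset.mem_Icc, Finset.mem_insert, Finset.mem_sdiff, Finset.mem_singleton]
    omega
  have hsplit : ∀ g : ℕ → K, ∑ i ∈ Icc 1 n, g i
      = g s + g (s+1) + ∑ i ∈ Icc 1 n \ {s, s+1}, g i := by
    intro g
    nth_rewrite 1 [hins]
    rw [Finset.sum_insert (by simp), Finset.sum_insert (by simp)]
    ring
  rw [hsplit, hsplit]
  have hrest : ∑ i ∈ Icc 1 n \ {s, s+1}, thq q n γ i * qint q (γ i)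
      = ∑ i ∈ Icc 1 n \ {s, s+1}, thq q n β i * qint q (β i) := by
    refine Finset.sum_congr rfl fun i hi => ?_
    simp only [Finset.mem_sdiff, Finset.mem_Icc, Finset.mem_insert, Finset.mem_singleton,
      not_or] at hi
    obtain ⟨⟨hi1, hi2⟩, hins', hins1⟩ := hi
    have hγi : γ i = β i := by
      rw [happ i, if_neg hins', if_neg hins1]; ring
    rw [hγi]
    congr 1
    unfold thq
    congr 1
    rw [hsum (Icc (i+1) n), hsum (Ico 1 i)]
    simp only [Finset.mem_Icc, Finset.mem_Ico]
    split_ifs <;> (first | ring1 | (exfalso; omega))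
  rw [hrest]
  congr 1
  have hγs : γ s = β s + 1 := by rw [happ s, if_pos rfl, if_neg (by omega)]; ring
  have hγs1 : γ (s+1) = β (s+1) - 1 := by rw [happ (s+1), if_neg (by omega), if_pos rfl]; ring
  set a := β s with ha
  set b := β (s+1) with hb
  set A := ∑ i ∈ Icc (s+2) n, β i with hA
  set P := ∑ i ∈ Ico 1 s, β i with hP
  have hR : ∑ i ∈ Icc (s+1) n, β i = b + A := by
    rw [aux_sum_Icc_bot β (s+1) n (by omega)]
  have hP' : ∑ i ∈ Ico 1 (s+1), β i = P + a := by
    rw [Finset.sum_Ico_succ_top hs1]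
  have h1 : thq q n γ s = q ^ (b + A - 1 - P) := by
    unfold thq
    congr 1
    rw [hsum (Icc (s+1) n), hsum (Ico 1 s), hR]
    rw [if_neg (by simp only [Finset.mem_Icc]; omega),
        if_pos (by simp only [Finset.mem_Icc]; omega),
        if_neg (by simp only [Finset.mem_Ico]; omega),
        if_neg (by simp only [Finset.mem_Ico]; omega)]
    ring
  have h2 : thq q n γ (s+1) = q ^ (A - P - a - 1) := by
    unfold thq
    congr 1
    rw [hsum (Icc (s+1+1) n), hsum (Ico 1 (s+1))]
    rw [if_neg (by simp only [Finset.mem_Icc]; omega),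
        if_neg (by simp only [Finset.mem_Icc]; omega),
        if_pos (by simp only [Finset.mem_Ico]; omega),
        if_neg (by simp only [Finset.mem_Ico]; omega)]
    rw [show s + 1 + 1 = s + 2 from rfl, ← hA, hP']
    ring
  have h3 : thq q n β s = q ^ (b + A - P) := by
    unfold thq
    congr 1
    rw [hR]
  have h4 : thq q n β (s+1) = q ^ (A - P - a) := by
    unfold thq
    congr 1
    rw [show s + 1 + 1 = s + 2 from rfl, ← hA, hP']
    ring
  rw [hγs, hγs1, h1, h2, h3, h4]
  have hqq : q * q⁻¹ = 1 := mul_inv_cancel₀ hq0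
  simp only [qint, sub_eq_add_neg, neg_add, neg_neg, zpow_add₀ hq0, zpow_one, zpow_neg_one]
  linear_combination (q ^ A * q ^ (-P) * (q ^ a * q ^ b - q ^ (-a) * q ^ (-b)) / (q + -q⁻¹)) * hqq

end Aux

theorem qbracket_adjacent {K V : Type*} [Field K] [AddCommGroup V] [Module K V]
    (q : K) (hq0 : q ≠ 0) (hq1 : q ≠ 1) (hqm : q ≠ -1) (n s : ℕ)
    (hs1 : 1 ≤ s) (hs2 : s < n)
    (X : (ℕ → ℤ) → V)
    (hX0 : ∀ β : ℕ → ℤ, (∃ k ∈ Finset.Icc 1 n, β k < 0) → X β = 0)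
    (E1 E2 : Module.End K V)
    (hE1 : ∀ β : ℕ → ℤ, (∀ k ∈ Finset.Icc 1 n, 0 ≤ β k) →
      E1 (X β) = qint q (β s + 1) • X (β + eps s - eps (s + 1)))
    (hE2 : ∀ β : ℕ → ℤ, (∀ k ∈ Finset.Icc 1 n, 0 ≤ β k) →
      E2 (X β) = (q ^ (-(∑ i ∈ Finset.Icc (s + 2) n, β i)) * qint q (β (s + 1) + 1) *
          ∑ i ∈ Finset.Icc 1 n, thq q n β i * qint q (β i)) • X (β + eps (s + 1))) :
    ∀ β : ℕ → ℤ, (∀ k ∈ Finset.Icc 1 n, 0 ≤ β k) →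
      (E1 * E2 - q • (E2 * E1)) (X β) =
        (q ^ (-(∑ i ∈ Finset.Icc (s + 1) n, β i)) * qint q (β s + 1) *
          ∑ i ∈ Finset.Icc 1 n, thq q n β i * qint q (β i)) • X (β + eps s) := by
  intro β hβ
  have hd : q - q⁻¹ ≠ 0 := aux_hd q hq0 hq1 hqm
  have hR : ∑ i ∈ Finset.Icc (s+1) n, β i
      = β (s+1) + ∑ i ∈ Finset.Icc (s+2) n, β i := by
    rw [aux_sum_Icc_bot β (s+1) n (by omega)]
  have hβ₁nn : ∀ k ∈ Finset.Icc 1 n, 0 ≤ (β + eps (s+1)) k := by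
    intro k hk
    have := hβ k hk
    simp only [Pi.add_apply, eps]
    split <;> omega
  simp only [LinearMap.sub_apply, LinearMap.smul_apply, Module.End.mul_apply]
  rw [hE2 β hβ, hE1 β hβ, map_smul, map_smul, hE1 _ hβ₁nn]
  have e1 : (β + eps (s+1)) s = β s := by
    simp only [Pi.add_apply, eps]
    rw [if_neg (by omega : ¬ s = s + 1), add_zero]
  have e2 : β + eps (s+1) + eps s - eps (s+1) = β + eps s := by abel
  rw [e1, e2, hR]
  set S := ∑ i ∈ Finset.Icc 1 n, thq q n β i * qint q (β i) with hS
  set A := ∑ i ∈ Finset.Icc (s+2) n, β i with hA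
  by_cases hb : β (s+1) = 0
  · have hX2 : X (β + eps s - eps (s+1)) = 0 := by
      apply hX0
      refine ⟨s+1, by simp only [Finset.mem_Icc]; omega, ?_⟩
      have hv : (β + eps s - eps (s+1)) (s+1) = β (s+1) - 1 := by
        simp only [Pi.sub_apply, Pi.add_apply, eps]
        rw [if_neg (by omega : ¬ s + 1 = s)]
        simp
      rw [hv, hb]
      norm_num
    rw [hX2, map_zero, smul_zero, smul_zero, sub_zero, smul_smul]
    rw [hb]
    simp only [zero_add, aux_qint_one q hd]
    ring
  · have hβ₂nn : ∀ k ∈ Finset.Icc 1 n, 0 ≤ (β + eps s - eps (s+1)) k := by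
      intro k hk
      have h1 := hβ k hk
      have h2 : 1 ≤ β (s+1) := by
        have := hβ (s+1) (by simp only [Finset.mem_Icc]; omega)
        omega
      rcases eq_or_ne k (s+1) with hk1 | hk1
      · subst hk1
        simp only [Pi.sub_apply, Pi.add_apply, eps,
          if_neg (by omega : ¬ s + 1 = s), if_pos rfl]
        omega
      · simp only [Pi.sub_apply, Pi.add_apply, eps, if_neg hk1]
        split_ifs <;> omega
    rw [hE2 _ hβ₂nn]
    have e3 : (β + eps s - eps (s+1)) (s+1) = β (s+1) - 1 := by
      simp only [Pi.sub_apply, Pi.add_apply, eps]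
      rw [if_neg (by omega : ¬ s + 1 = s)]
      simp
    have e4 : β + eps s - eps (s+1) + eps (s+1) = β + eps s := by abel
    have e5 : ∑ i ∈ Finset.Icc (s+2) n, (β + eps s - eps (s+1)) i = A := by
      rw [hA]
      refine Finset.sum_congr rfl fun i hi => ?_
      simp only [Finset.mem_Icc] at hi
      simp only [Pi.sub_apply, Pi.add_apply, eps]
      rw [if_neg (by omega), if_neg (by omega)]
      ring
    have e6 : ∑ i ∈ Finset.Icc 1 n, thq q n (β + eps s - eps (s+1)) i
        * qint q ((β + eps s - eps (s+1)) i) = S :=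
      aux_S_inv q hq0 n s hs1 hs2 β
    rw [e3, e4, e5, e6, show β (s+1) - 1 + 1 = β (s+1) by ring]
    rw [smul_smul, smul_smul, smul_smul, ← sub_smul]
    congr 1
    rw [aux_qint_succ q hq0 hd (β (s+1)),
        show -(β (s+1) + A) = -β (s+1) + -A by ring, zpow_add₀ hq0]
    ring
end
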